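/- There exists a one-hidden-layer-style ReLU network configuration for which an active path region is disconnected: concretely, there exist parameters of a ReLU network with input dimension 1 and a path π such that A_π = {x ∈ ℝ : f_π(x) = 1} = [0.5, 1.5] ∪ [2.5, 3.5], which is not a connected (nor convex) subset of ℝ. -/

import Mathlib

/-!
The second-layer unit sums the first-layer hinges `max (x - j) 0`, `j = 0, 1, 2, 3`, with
weights `1, -2, 2, -2` into a zigzag that rises on `[0, 1]`, falls on `[1, 2]`, rises on
`[2, 3]` and falls after `3`; with bias `-1/2` it is active exactly where the zigzag is at
least `1/2`, i.e. on two separated intervals. On the real line convexity and connectedness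
both amount to order-connectedness, which the gap `(1.5, 2.5)` violates.
-/

open Matrix Set

noncomputable def ind (t : ℝ) : ℝ := if 0 ≤ t then 1 else 0

theorem ind_mul_ind_eq_one_iff (a b : ℝ) : ind a * ind b = 1 ↔ 0 ≤ a ∧ 0 ≤ b := by
  unfold ind
  split_ifs <;> simp_all

def zigzag (x : ℝ) : ℝ :=
  max x 0 - 2 * max (x - 1) 0 + 2 * max (x - 2) 0 - 2 * max (x - 3) 0

theorem half_le_zigzag_iff (x : ℝ) :
    1 / 2 ≤ zigzag x ↔ x ∈ Icc (0.5 : ℝ) 1.5 ∪ Icc 2.5 3.5 := by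
  simp only [zigzag, mem_union, mem_Icc, max_def]
  split_ifs <;> grind

theorem nonneg_and_half_le_zigzag_iff (x : ℝ) :
    0 ≤ x ∧ 1 / 2 ≤ zigzag x ↔ x ∈ Icc (0.5 : ℝ) 1.5 ∪ Icc 2.5 3.5 := by
  refine ⟨fun h => (half_le_zigzag_iff x).1 h.2, fun h => ⟨?_, (half_le_zigzag_iff x).2 h⟩⟩
  rcases h with ⟨h, -⟩ | ⟨h, -⟩ <;> linarith

theorem not_ordConnected_Icc_union_Icc {a b c d : ℝ} (hab : a ≤ b) (hbc : b < c) (hcd : c ≤ d) :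
    ¬ OrdConnected (Icc a b ∪ Icc c d) := by
  intro h
  have hmid := h.out (Or.inl ⟨hab, le_rfl⟩) (Or.inr ⟨le_rfl, hcd⟩)
    (show (b + c) / 2 ∈ Icc b c from ⟨by linarith, by linarith⟩)
  rcases hmid with ⟨-, h⟩ | ⟨h, -⟩ <;> linarith

/-- There is a 2-hidden-layer ReLU network (with biases) on a 1-dimensional input and a
path through it whose active region is `[0.5, 1.5] ∪ [2.5, 3.5]`; this set is neither
convex nor connected. -/
theorem relu_active_path_region_can_be_disconnected :
    (∃ (m : ℕ) (W1 : Matrix (Fin m) (Fin 1) ℝ) (b1 : Fin m → ℝ)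
        (W2 : Matrix (Fin m) (Fin m) ℝ) (b2 : Fin m → ℝ) (i1 i2 : Fin m),
      {x : ℝ |
          ind ((W1.mulVec fun _ => x) i1 + b1 i1) *
            ind ((W2.mulVec fun j => max ((W1.mulVec fun _ => x) j + b1 j) 0) i2 + b2 i2)
          = 1}
        = Set.Icc (0.5 : ℝ) 1.5 ∪ Set.Icc 2.5 3.5) ∧
      ¬ Convex ℝ (Set.Icc (0.5 : ℝ) 1.5 ∪ Set.Icc 2.5 3.5) ∧
      ¬ IsConnected (Set.Icc (0.5 : ℝ) 1.5 ∪ Set.Icc 2.5 3.5) := by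
  have hgap := not_ordConnected_Icc_union_Icc (a := 0.5) (b := 1.5) (c := 2.5) (d := 3.5)
    (by norm_num) (by norm_num) (by norm_num)
  refine ⟨⟨4, fun _ _ => 1, ![0, -1, -2, -3], fun _ => ![1, -2, 2, -2], fun _ => -(1 / 2),
    0, 0, ?_⟩, fun h => hgap h.ordConnected,
    fun h => hgap h.isPreconnected.ordConnected⟩
  ext x
  convert nonneg_and_half_le_zigzag_iff x using 2
  simp [ind_mul_ind_eq_one_iff, mulVec, dotProduct, Fin.sum_univ_four, zigzag,
    ← sub_eq_add_neg, sub_nonneg]
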